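/- arXiv:2205.04336 — 3 statements merged into one kernel-verified Lean document; each statement's English description precedes it below -/
import Mathlib

section
/- Let W be a well order (a linear order whose strict order relation is well-founded) and n > 0. Then every map f : [ℕ]^n → W is good, i.e., there exist s ⊲ t in [ℕ]^n with f(s) ≤_W f(t). -/
universe u v

/-! ### First-difference index and the lexicographic relation `≺` -/

/-- `jIdx α β` is the least `j < min (l α) (l β)` with `α_j ≠ β_j`,
or `min (l α) (l β)` if no such index exists. -/
noncomputable def jIdx {X : Type u} (α β : List X) : ℕ := by
  classical
  exact if h : ∃ j, j < min α.length β.length ∧ α[j]? ≠ β[j]? then Nat.find h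
    else min α.length β.length

/-- The relation `≺` on finite sequences over `(X, lt)`. -/
noncomputable def SeqLT {X : Type u} (lt : X → X → Prop) (α β : List X) : Prop :=
  (∃ h : jIdx α β < min α.length β.length,
      lt (α[jIdx α β]'(lt_of_lt_of_le h (min_le_left _ _)))
         (β[jIdx α β]'(lt_of_lt_of_le h (min_le_right _ _)))) ∨
  (jIdx α β = α.length ∧ α.length < β.length)

/-! ### Orders of the form `ω + Y` -/

/-- The least element `0 = (0,0)` of `ℕ ⊕ₗ Y`. -/
def omegaZero (Y : Type u) [LinearOrder Y] : ℕ ⊕ₗ Y := toLex (Sum.inl 0)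

/-- The map `x ↦ 1 + x` on `ℕ ⊕ₗ Y`. -/
def omegaOnePlus (Y : Type u) [LinearOrder Y] : ℕ ⊕ₗ Y → ℕ ⊕ₗ Y := fun x =>
  match ofLex x with
  | Sum.inl n => toLex (Sum.inl (n + 1))
  | Sum.inr y => toLex (Sum.inr y)

/-- The extended sequence `ᾱ : ℕ → T`: `ᾱ_j = 1 + α_j` for `j < l α` and `ᾱ_j = 0` otherwise,
relative to a given least element `zero` and map `onePlus`. -/
def extW {T : Type u} (zero : T) (onePlus : T → T) (α : List T) (j : ℕ) : T :=
  if h : j < α.length then onePlus (α[j]'h) else zero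

/-- `c(α, β) := ᾱ_{j(α,β)}`. -/
noncomputable def cW {T : Type u} (zero : T) (onePlus : T → T) (α β : List T) : T :=
  extW zero onePlus α (jIdx α β)

/-! ### The iterated construction `ω^X_n` -/

/-- A carrier together with relations `<` and `≤` (a raw order package). -/
structure OrdPack : Type (u + 1) where
  T : Type u
  lt : T → T → Prop
  le : T → T → Prop

/-- The package for `ω(X)`: weakly decreasing finite sequences with `≺` and `⪯`. -/
noncomputable def stepPack (P : OrdPack.{u}) : OrdPack.{u} where
  T := {α : List P.T // List.Chain' (fun a b => P.le b a) α}
  lt a b := SeqLT P.lt a.1 b.1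
  le a b := SeqLT P.lt a.1 b.1 ∨ a = b

/-- The package of a linear order. -/
def linPack (Z : Type u) [LinearOrder Z] : OrdPack.{u} := ⟨Z, (· < ·), (· ≤ ·)⟩

/-- The package of `X = ω + Y`. -/
def basePack (Y : Type u) [LinearOrder Y] : OrdPack.{u} := linPack (ℕ ⊕ₗ Y)

/-- `iterPack P n` is (the package of) `ω^X_n` for `X` the order packaged by `P`. -/
noncomputable def iterPack (P : OrdPack.{u}) : ℕ → OrdPack.{u}
  | 0 => P
  | n + 1 => stepPack (iterPack P n)

theorem leReflIter (Y : Type u) [LinearOrder Y] :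
    ∀ (m : ℕ) (x : (iterPack (basePack Y) m).T), (iterPack (basePack Y) m).le x x
  | 0, x => le_refl (α := ℕ ⊕ₗ Y) x
  | _ + 1, _ => Or.inr rfl

theorem chain'_cons_all_eq {T : Type u} {R : T → T → Prop} {z : T} (hz : R z z) :
    ∀ l : List T, (∀ x ∈ l, x = z) → List.Chain' R (z :: l) := by
  intro l
  induction l with
  | nil => intro _; exact List.isChain_singleton z
  | cons a l ih =>
    intro h
    have ha : a = z := h a List.mem_cons_self
    subst ha
    exact List.isChain_cons_cons.mpr ⟨hz, ih fun x hx => h x (List.mem_cons_of_mem _ hx)⟩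

/-- The least element `0` of `ω^X_m` (for `X = ω + Y`). -/
noncomputable def zeroIter (Y : Type u) [LinearOrder Y] :
    (m : ℕ) → (iterPack (basePack Y) m).T
  | 0 => omegaZero Y
  | _ + 1 => ⟨[], List.isChain_nil⟩

/-- The map `x ↦ 1 + x` on `ω^X_m` (for `X = ω + Y`): at successor levels it maps a
constant-zero sequence to the constant-zero sequence that is longer by one, and is the
identity everywhere else. -/
noncomputable def onePlusIter (Y : Type u) [LinearOrder Y] :
    (m : ℕ) → (iterPack (basePack Y) m).T → (iterPack (basePack Y) m).T
  | 0, x => omegaOnePlus Y x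
  | m + 1, a => by
    classical
    exact if h : ∀ x ∈ a.1, x = zeroIter Y m then
      ⟨zeroIter Y m :: a.1,
        chain'_cons_all_eq (R := fun p q => (iterPack (basePack Y) m).le q p)
          (leReflIter Y m (zeroIter Y m)) a.1 h⟩
    else a

/-- `c(α, β) ∈ ω^X_m` for `α, β ∈ ω^X_{m+1}` (given via their underlying lists). -/
noncomputable def cIter (Y : Type u) [LinearOrder Y] (m : ℕ)
    (α β : List (iterPack (basePack Y) m).T) : (iterPack (basePack Y) m).T :=
  cW (zeroIter Y m) (onePlusIter Y m) α β

/-- Transport along an equality of levels. -/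
noncomputable def castT {Y : Type u} [LinearOrder Y] {a b : ℕ} (h : a = b)
    (x : (iterPack (basePack Y) a).T) : (iterPack (basePack Y) b).T :=
  cast (congrArg (fun m => (iterPack (basePack Y) m).T) h) x

/-! ### Barriers `[ℕ]^n`, the relation `⊲`, and `∪` -/

/-- `s ⊲ t` : `s_0 < t_0` and `s_{i+1} = t_i` for all `i < n`. -/
def Tril {n : ℕ} (s t : Fin (n + 1) → ℕ) : Prop :=
  s 0 < t 0 ∧ ∀ i : Fin n, s i.succ = t i.castSucc

/-- `s ∪ t` for `s ⊲ t` : `(s ∪ t)_i = s_i` for `i ≤ n` and `(s ∪ t)_{n+1} = t_n`. -/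
def unionSeq {n : ℕ} (s t : Fin (n + 1) → ℕ) : Fin (n + 2) → ℕ := fun i =>
  if h : (i : ℕ) < n + 1 then s ⟨i, h⟩ else t (Fin.last n)

/-- Componentwise order on `ℕ^k × T`. -/
def prodLE {k : ℕ} {T : Type u} (le : T → T → Prop) (a b : (Fin k → ℕ) × T) : Prop :=
  (∀ i, a.1 i ≤ b.1 i) ∧ le a.2 b.2

/-- A map `g : [ℕ]^{m+1} → Q` is good if there are `s ⊲ t` with `g s ≤ g t`. -/
def GoodSub {m : ℕ} {Q : Type v} (le : Q → Q → Prop)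
    (g : {s : Fin (m + 1) → ℕ // StrictMono s} → Q) : Prop :=
  ∃ s t : {s : Fin (m + 1) → ℕ // StrictMono s}, Tril s.1 t.1 ∧ le (g s) (g t)

/-! ### The maps `f_k` -/

/-- The maps `f_k : [ℕ]^{k+1} → ℕ^k × ω^X_{n-k}` of Definition 2.4 (extended to all of
`ℕ^{k+1}`; only values on strictly increasing arguments matter). -/
noncomputable def fk {Y : Type u} [LinearOrder Y] (n : ℕ)
    (f : ℕ → (iterPack (basePack Y) n).T) :
    (k : ℕ) → (Fin (k + 1) → ℕ) → (Fin k → ℕ) × (iterPack (basePack Y) (n - k)).T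
  | 0, s => (fun i => i.elim0, f (s 0))
  | k + 1, u =>
    let a := fk n f k (u ∘ Fin.castSucc)
    let b := fk n f k (u ∘ Fin.succ)
    if h : k < n then
      let a2 := castT (show n - k = (n - (k + 1)) + 1 by omega) a.2
      let b2 := castT (show n - k = (n - (k + 1)) + 1 by omega) b.2
      (Fin.snoc a.1 (jIdx a2.1 b2.1), cIter Y (n - (k + 1)) a2.1 b2.1)
    else (Fin.snoc a.1 0, castT (show n - k = n - (k + 1) by omega) a.2)

/-- Linearity of a package (so that its carrier is a linear order). -/
def PackIsLinear (P : OrdPack.{u}) : Prop :=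
  (∀ a, P.le a a) ∧
  (∀ a b c, P.le a b → P.le b c → P.le a c) ∧
  (∀ a b, P.le a b → P.le b a → a = b) ∧
  (∀ a b, P.le a b ∨ P.le b a) ∧
  (∀ a b, P.lt a b ↔ P.le a b ∧ ¬ P.le b a)

/-- The Higman (sublist) order on finite lists over `(Q, le)`. -/
def HigmanLE {Q : Type v} (le : Q → Q → Prop) (σ τ : List Q) : Prop :=
  ∃ f : Fin σ.length → Fin τ.length, StrictMono f ∧ ∀ i, le (σ.get i) (τ.get (f i))
/-- Let `W` be a well order (a linear order whose strict order relation is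
well-founded). Then every map `f : [ℕ]^{n+1} → W` is good: there are `s ⊲ t` in `[ℕ]^{n+1}`
with `f s ≤ f t`. -/
theorem good_of_wellOrder {W : Type u} [LinearOrder W]
    (hW : WellFounded ((· < ·) : W → W → Prop)) (n : ℕ)
    (f : {s : Fin (n + 1) → ℕ // StrictMono s} → W) :
    ∃ s t : {s : Fin (n + 1) → ℕ // StrictMono s}, Tril s.1 t.1 ∧ f s ≤ f t := by
  by_contra hbad
  push_neg at hbad
  -- the strictly increasing sequence starting at k
  set S : ℕ → {s : Fin (n + 1) → ℕ // StrictMono s} :=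
    fun k => ⟨fun i => k + i, fun i j hij => by
      exact Nat.add_lt_add_left (by exact_mod_cast hij) k⟩ with hS
  have htril : ∀ k, Tril (S k).1 (S (k + 1)).1 := by
    intro k
    constructor
    · simp [hS]
    · intro i
      simp [hS, Fin.val_succ, Fin.coe_castSucc]
      omega
  have hdesc : ∀ k, f (S (k + 1)) < f (S k) := fun k =>
    hbad (S k) (S (k + 1)) (htril k)
  obtain ⟨w, ⟨k, hk⟩, hmin⟩ := hW.has_min (Set.range fun k => f (S k)) ⟨f (S 0), 0, rfl⟩
  exact hmin (f (S (k + 1))) ⟨k + 1, rfl⟩ (hk ▸ hdesc k)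
end

section
/- Let X be a linear order of the form ω + Y, let n ∈ ℕ, let f : ℕ → ω^X_n, and let k < n. If the map f_k : [ℕ]^{k+1} → ℕ^k × ω^X_{n−k} is bad, then the map f_{k+1} : [ℕ]^{k+2} → ℕ^{k+1} × ω^X_{n−k−1} is bad. -/
universe u v

/-! ### Auxiliary lemmas (added for the proof) -/

section JIdxAux

variable {X : Type u}

theorem jIdx_le_min (α β : List X) : jIdx α β ≤ min α.length β.length := by
  classical
  unfold jIdx
  split
  · next h => exact le_of_lt (Nat.find_spec h).1
  · exact le_rfl

theorem jIdx_getElem?_ne {α β : List X} (h : jIdx α β < min α.length β.length) :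
    α[jIdx α β]? ≠ β[jIdx α β]? := by
  classical
  by_cases hex : ∃ j, j < min α.length β.length ∧ α[j]? ≠ β[j]?
  · have e : jIdx α β = Nat.find hex := by unfold jIdx; rw [dif_pos hex]
    rw [e]
    exact (Nat.find_spec hex).2
  · have e : jIdx α β = min α.length β.length := by unfold jIdx; rw [dif_neg hex]
    rw [e] at h
    exact absurd h (lt_irrefl _)

theorem jIdx_getElem?_eq {α β : List X} {i : ℕ} (hi : i < jIdx α β) : α[i]? = β[i]? := by
  classical
  unfold jIdx at hi
  split at hi
  · next h =>
    by_contra hne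
    exact Nat.find_min h hi ⟨hi.trans (Nat.find_spec h).1, hne⟩
  · next h =>
    by_contra hne
    exact h ⟨i, hi, hne⟩

theorem jIdx_nil_left (β : List X) : jIdx ([] : List X) β = 0 := by
  classical
  unfold jIdx
  rw [dif_neg]
  · simp only [List.length_nil]
    omega
  · rintro ⟨j, hj, -⟩
    simp only [List.length_nil] at hj
    omega

theorem jIdx_cons_ne {a b : X} (hab : a ≠ b) (α β : List X) : jIdx (a :: α) (b :: β) = 0 := by
  classical
  have hex : ∃ j, j < min (a :: α).length (b :: β).length ∧ (a :: α)[j]? ≠ (b :: β)[j]? :=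
    ⟨0, by simp only [List.length_cons]; omega, by simpa using hab⟩
  unfold jIdx
  rw [dif_pos hex]
  exact (Nat.find_eq_zero hex).2 ⟨by simp only [List.length_cons]; omega, by simpa using hab⟩

theorem jIdx_cons_cons (a : X) (α β : List X) : jIdx (a :: α) (a :: β) = jIdx α β + 1 := by
  classical
  have hiff : ∀ j : ℕ,
      ((j + 1) < min (a :: α).length (a :: β).length ∧ (a :: α)[j + 1]? ≠ (a :: β)[j + 1]?)
        ↔ (j < min α.length β.length ∧ α[j]? ≠ β[j]?) := by
    intro j
    simp only [List.length_cons, List.getElem?_cons_succ]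
    exact and_congr (by omega) Iff.rfl
  have h0 : ¬(0 < min (a :: α).length (a :: β).length ∧ (a :: α)[0]? ≠ (a :: β)[0]?) := by
    simp
  by_cases hq : ∃ j, j < min α.length β.length ∧ α[j]? ≠ β[j]?
  · have hp : ∃ j, j < min (a :: α).length (a :: β).length ∧ (a :: α)[j]? ≠ (a :: β)[j]? := by
      obtain ⟨j, hj⟩ := hq
      exact ⟨j + 1, (hiff j).2 hj⟩
    unfold jIdx
    rw [dif_pos hp, dif_pos hq, Nat.find_eq_iff]
    refine ⟨(hiff _).2 (Nat.find_spec hq), ?_⟩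
    intro m hm
    cases m with
    | zero => exact h0
    | succ j =>
      intro hc
      exact Nat.find_min hq (by omega) ((hiff j).1 hc)
  · have hp : ¬∃ j, j < min (a :: α).length (a :: β).length ∧ (a :: α)[j]? ≠ (a :: β)[j]? := by
      rintro ⟨j, hj⟩
      cases j with
      | zero => exact h0 hj
      | succ j => exact hq ⟨j, (hiff j).1 hj⟩
    unfold jIdx
    rw [dif_neg hp, dif_neg hq]
    simp only [List.length_cons]
    omega

theorem eq_of_jIdx_eq {α β : List X} (hlen : α.length = β.length) (hj : jIdx α β = α.length) :
    α = β := by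
  apply List.ext_getElem?
  intro i
  by_cases hi : i < α.length
  · exact jIdx_getElem?_eq (by omega)
  · rw [List.getElem?_eq_none (by omega), List.getElem?_eq_none (by omega)]

end JIdxAux

section SeqLTAux

variable {X : Type u}

theorem seqLT_iff_getElem? (lt : X → X → Prop) (α β : List X) :
    SeqLT lt α β ↔
      ((∃ x y, α[jIdx α β]? = some x ∧ β[jIdx α β]? = some y ∧ lt x y) ∨
        (jIdx α β = α.length ∧ α.length < β.length)) := by
  unfold SeqLT
  refine or_congr ⟨?_, ?_⟩ Iff.rfl
  · rintro ⟨h, hlt⟩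
    exact ⟨_, _, List.getElem?_eq_getElem (lt_of_lt_of_le h (min_le_left _ _)),
      List.getElem?_eq_getElem (lt_of_lt_of_le h (min_le_right _ _)), hlt⟩
  · rintro ⟨x, y, hx, hy, hlt⟩
    obtain ⟨h1, rfl⟩ := List.getElem?_eq_some_iff.1 hx
    obtain ⟨h2, rfl⟩ := List.getElem?_eq_some_iff.1 hy
    exact ⟨lt_min h1 h2, hlt⟩

theorem seqLT_nil_right (lt : X → X → Prop) (α : List X) : ¬ SeqLT lt α [] := by
  rintro (⟨h, -⟩ | ⟨-, h⟩)
  · simp only [List.length_nil, Nat.min_zero] at h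
    omega
  · simp only [List.length_nil] at h
    omega

theorem seqLT_nil_cons (lt : X → X → Prop) (b : X) (β : List X) : SeqLT lt [] (b :: β) :=
  Or.inr ⟨jIdx_nil_left _, by simp⟩

theorem seqLT_cons_cons (lt : X → X → Prop) (a : X) (α β : List X) :
    SeqLT lt (a :: α) (a :: β) ↔ SeqLT lt α β := by
  simp only [seqLT_iff_getElem?, jIdx_cons_cons, List.getElem?_cons_succ, List.length_cons]
  exact or_congr Iff.rfl (by omega)

theorem seqLT_congr {lt1 lt2 : X → X → Prop} (h : ∀ a b, lt1 a b ↔ lt2 a b)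
    (α β : List X) : SeqLT lt1 α β ↔ SeqLT lt2 α β := by
  rw [seqLT_iff_getElem?, seqLT_iff_getElem?]
  refine or_congr ⟨?_, ?_⟩ Iff.rfl
  · rintro ⟨x, y, hx, hy, hlt⟩
    exact ⟨x, y, hx, hy, (h x y).1 hlt⟩
  · rintro ⟨x, y, hx, hy, hlt⟩
    exact ⟨x, y, hx, hy, (h x y).2 hlt⟩

end SeqLTAux

theorem seqLT_iff_lex {T : Type u} [LinearOrder T] :
    ∀ (α β : List T), SeqLT (· < ·) α β ↔ List.Lex (· < ·) α β
  | [], [] => iff_of_false (seqLT_nil_right _ _) List.not_lex_nil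
  | [], b :: β => iff_of_true (seqLT_nil_cons _ b β) List.Lex.nil
  | a :: α, [] => iff_of_false (seqLT_nil_right _ _) List.not_lex_nil
  | a :: α, b :: β => by
    by_cases hab : a = b
    · subst hab
      rw [seqLT_cons_cons, List.lex_cons_iff]
      exact seqLT_iff_lex α β
    · rw [seqLT_iff_getElem?, jIdx_cons_ne hab]
      constructor
      · rintro (⟨x, y, hx, hy, hlt⟩ | ⟨h1, -⟩)
        · simp only [List.getElem?_cons_zero, Option.some.injEq] at hx hy
          subst hx
          subst hy
          exact List.Lex.rel hlt
        · simp only [List.length_cons] at h1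
          omega
      · intro h
        cases h with
        | rel h' => exact Or.inl ⟨a, b, by simp, by simp, h'⟩
        | cons h' => exact absurd rfl hab

theorem lex_replicate_iff {T : Type u} [LinearOrder T] (z : T) :
    ∀ p q : ℕ, List.Lex (· < ·) (List.replicate p z) (List.replicate q z) ↔ p < q
  | 0, 0 => iff_of_false List.not_lex_nil (by omega)
  | 0, q + 1 => iff_of_true List.Lex.nil (by omega)
  | p + 1, 0 => iff_of_false List.not_lex_nil (by omega)
  | p + 1, q + 1 => by
    simp only [List.replicate_succ]
    rw [List.lex_cons_iff, lex_replicate_iff z p q]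
    omega

theorem lex_replicate_of_ne {T : Type u} [LinearOrder T] {z : T} (hz : ∀ x, z ≤ x) :
    ∀ {l : List T}, (¬ ∀ y ∈ l, y = z) → ∀ q : ℕ, List.Lex (· < ·) (List.replicate q z) l
  | [], h, _ => absurd (by simp) h
  | _ :: _, _, 0 => List.Lex.nil
  | c :: l, h, q + 1 => by
    rw [List.replicate_succ]
    by_cases hc : c = z
    · subst hc
      apply List.Lex.cons
      apply lex_replicate_of_ne hz (l := l) _ q
      intro hl
      apply h
      intro y hy
      rcases List.mem_cons.1 hy with rfl | hy
      · rfl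
      · exact hl y hy
    · exact List.Lex.rel (lt_of_le_of_ne (hz c) (Ne.symm hc))

/-- The linear order structure on `ω^X_m`. -/
noncomputable def linIter (Y : Type u) [LinearOrder Y] :
    (m : ℕ) → LinearOrder (iterPack (basePack Y) m).T
  | 0 => inferInstanceAs (LinearOrder (ℕ ⊕ₗ Y))
  | m + 1 =>
    @Subtype.instLinearOrder (List (iterPack (basePack Y) m).T)
      (@List.instLinearOrder _ (linIter Y m))
      (List.Chain' (fun a b => (iterPack (basePack Y) m).le b a))

noncomputable abbrev ltIter (Y : Type u) [LinearOrder Y] (m : ℕ)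
    (a b : (iterPack (basePack Y) m).T) : Prop :=
  letI := linIter Y m
  a < b

noncomputable abbrev leIter (Y : Type u) [LinearOrder Y] (m : ℕ)
    (a b : (iterPack (basePack Y) m).T) : Prop :=
  letI := linIter Y m
  a ≤ b

theorem iter_lt_iff (Y : Type u) [LinearOrder Y] :
    ∀ (m : ℕ) (a b : (iterPack (basePack Y) m).T),
      (iterPack (basePack Y) m).lt a b ↔ ltIter Y m a b
  | 0, _, _ => Iff.rfl
  | m + 1, a, b => by
    letI := linIter Y m
    have h := (seqLT_congr (iter_lt_iff Y m) a.1 b.1).trans (seqLT_iff_lex a.1 b.1)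
    exact ⟨fun hx => h.1 hx, fun hx => h.2 hx⟩

theorem iter_le_iff (Y : Type u) [LinearOrder Y] :
    ∀ (m : ℕ) (a b : (iterPack (basePack Y) m).T),
      (iterPack (basePack Y) m).le a b ↔ leIter Y m a b
  | 0, _, _ => Iff.rfl
  | m + 1, a, b => by
    letI := linIter Y (m + 1)
    have h := iter_lt_iff Y (m + 1) a b
    constructor
    · rintro (h1 | rfl)
      · exact le_of_lt (h.1 h1)
      · exact le_refl a
    · intro hle
      rcases lt_or_eq_of_le (hle : a ≤ b) with hlt | rfl
      · exact Or.inl (h.2 hlt)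
      · exact Or.inr rfl

theorem zero_le_iter (Y : Type u) [LinearOrder Y] :
    ∀ (m : ℕ) (x : (iterPack (basePack Y) m).T), leIter Y m (zeroIter Y m) x
  | 0, x => by
    rcases hx' : ofLex x with n | y
    · have hx2 : x = toLex (Sum.inl n) := congrArg toLex hx'
      rw [hx2]
      exact Sum.Lex.inl_le_inl_iff.2 (Nat.zero_le n)
    · have hx2 : x = toLex (Sum.inr y) := congrArg toLex hx'
      rw [hx2]
      exact Sum.Lex.inl_le_inr 0 y
  | m + 1, x => by
    letI := linIter Y m
    exact Subtype.coe_le_coe.1 (not_lt.1 List.not_lex_nil)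

theorem zero_lt_onePlus (Y : Type u) [LinearOrder Y] :
    ∀ (m : ℕ) (x : (iterPack (basePack Y) m).T),
      ltIter Y m (zeroIter Y m) (onePlusIter Y m x)
  | 0, x => by
    rcases hx' : ofLex x with n | y
    · have hx2 : x = toLex (Sum.inl n) := congrArg toLex hx'
      rw [hx2]
      exact Sum.Lex.inl_lt_inl_iff.2 (Nat.succ_pos n)
    · have hx2 : x = toLex (Sum.inr y) := congrArg toLex hx'
      rw [hx2]
      exact Sum.Lex.inl_lt_inr 0 y
  | m + 1, x => by
    letI := linIter Y m
    simp only [onePlusIter]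
    by_cases h : ∀ v ∈ x.1, v = zeroIter Y m
    · erw [dif_pos h]
      exact Subtype.coe_lt_coe.1 (List.nil_lt_cons _ _)
    · erw [dif_neg h]
      have hne : x.1 ≠ [] := by
        intro hnil
        apply h
        intro y hy
        rw [hnil] at hy
        cases hy
      rcases hl : x.1 with - | ⟨c, l⟩
      · exact absurd hl hne
      · refine Subtype.coe_lt_coe.1 ?_
        show List.Lex (· < ·) ([] : List (iterPack (basePack Y) m).T) x.1
        rw [hl]
        exact List.Lex.nil

theorem onePlus_lt_onePlus (Y : Type u) [LinearOrder Y] :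
    ∀ (m : ℕ) {x y : (iterPack (basePack Y) m).T}, ltIter Y m x y →
      ltIter Y m (onePlusIter Y m x) (onePlusIter Y m y)
  | 0, x, y, hxy => by
    rcases hx' : ofLex x with n | a <;> rcases hy' : ofLex y with p | b
    · have hx2 : x = toLex (Sum.inl n) := congrArg toLex hx'
      have hy2 : y = toLex (Sum.inl p) := congrArg toLex hy'
      rw [hx2, hy2] at hxy ⊢
      exact Sum.Lex.inl_lt_inl_iff.2 (Nat.succ_lt_succ (Sum.Lex.inl_lt_inl_iff.1 hxy))
    · have hx2 : x = toLex (Sum.inl n) := congrArg toLex hx'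
      have hy2 : y = toLex (Sum.inr b) := congrArg toLex hy'
      rw [hx2, hy2]
      exact Sum.Lex.inl_lt_inr _ b
    · have hx2 : x = toLex (Sum.inr a) := congrArg toLex hx'
      have hy2 : y = toLex (Sum.inl p) := congrArg toLex hy'
      rw [hx2, hy2] at hxy
      exact absurd hxy Sum.Lex.not_inr_lt_inl
    · have hx2 : x = toLex (Sum.inr a) := congrArg toLex hx'
      have hy2 : y = toLex (Sum.inr b) := congrArg toLex hy'
      rw [hx2, hy2] at hxy ⊢
      exact hxy
  | m + 1, x, y, hxy => by
    letI := linIter Y m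
    simp only [onePlusIter]
    by_cases hx : ∀ v ∈ x.1, v = zeroIter Y m <;> by_cases hy : ∀ v ∈ y.1, v = zeroIter Y m
    · erw [dif_pos hx, dif_pos hy]
      refine Subtype.coe_lt_coe.1 ?_
      show List.Lex (· < ·) (zeroIter Y m :: x.1) (zeroIter Y m :: y.1)
      have hxy' : List.Lex (· < ·) x.1 y.1 := Subtype.coe_lt_coe.2 hxy
      have h1 : List.Lex (· < ·) (List.replicate x.1.length (zeroIter Y m))
          (List.replicate y.1.length (zeroIter Y m)) := by
        rw [← List.eq_replicate_length.2 hx, ← List.eq_replicate_length.2 hy]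
        exact hxy'
      have hlen : x.1.length < y.1.length := (lex_replicate_iff _ _ _).1 h1
      rw [List.eq_replicate_length.2 hx, List.eq_replicate_length.2 hy,
        ← List.replicate_succ, ← List.replicate_succ]
      exact (lex_replicate_iff _ _ _).2 (Nat.succ_lt_succ hlen)
    · erw [dif_pos hx, dif_neg hy]
      refine Subtype.coe_lt_coe.1 ?_
      show List.Lex (· < ·) (zeroIter Y m :: x.1) y.1
      rw [List.eq_replicate_length.2 hx, ← List.replicate_succ]
      exact lex_replicate_of_ne (fun t => zero_le_iter Y m t) hy _
    · exfalso
      have hxy' : List.Lex (· < ·) x.1 y.1 := Subtype.coe_lt_coe.2 hxy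
      have h2 : List.Lex (· < ·) y.1 x.1 := by
        rw [List.eq_replicate_length.2 hy]
        exact lex_replicate_of_ne (fun t => zero_le_iter Y m t) hx _
      exact lt_asymm (show x.1 < y.1 from hxy') (show y.1 < x.1 from h2)
    · erw [dif_neg hx, dif_neg hy]
      exact hxy

theorem chain_le_getElem {Y : Type u} [LinearOrder Y] {m : ℕ}
    {l : List (iterPack (basePack Y) m).T}
    (hc : List.Chain' (fun a b => (iterPack (basePack Y) m).le b a) l)
    {i j : ℕ} (hij : i ≤ j) (hj : j < l.length) :
    leIter Y m (l[j]'hj) (l[i]'(by omega)) := by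
  letI := linIter Y m
  have hc' : List.Chain' (· ≥ ·) l := hc.imp (fun a b hab => (iter_le_iff Y m _ _).1 hab)
  haveI : IsTrans (iterPack (basePack Y) m).T (· ≥ ·) := ⟨fun _ _ _ h1 h2 => le_trans h2 h1⟩
  have hp : List.Pairwise (· ≥ ·) l := List.isChain_iff_pairwise.1 hc'
  rcases eq_or_lt_of_le hij with rfl | hlt
  · exact le_refl _
  · exact List.pairwise_iff_getElem.1 hp i j (by omega) hj hlt

theorem castT_le {Y : Type u} [LinearOrder Y] {a b : ℕ} (h : a = b)
    (x y : (iterPack (basePack Y) a).T) :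
    (iterPack (basePack Y) b).le (castT h x) (castT h y) ↔
      (iterPack (basePack Y) a).le x y := by
  subst h
  exact Iff.rfl

theorem key_le {Y : Type u} [LinearOrder Y] (m : ℕ)
    (α β : (iterPack (basePack Y) (m + 1)).T) (γ : List (iterPack (basePack Y) m).T)
    (hj : jIdx α.1 β.1 ≤ jIdx β.1 γ)
    (hc : (iterPack (basePack Y) m).le (cIter Y m α.1 β.1) (cIter Y m β.1 γ)) :
    (iterPack (basePack Y) (m + 1)).le α β := by
  letI := linIter Y m
  have hc' : leIter Y m (cIter Y m α.1 β.1) (cIter Y m β.1 γ) := (iter_le_iff Y m _ _).1 hc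
  have hjm := jIdx_le_min α.1 β.1
  show SeqLT (iterPack (basePack Y) m).lt α.1 β.1 ∨ α = β
  by_cases h1 : jIdx α.1 β.1 < min α.1.length β.1.length
  · have hja : jIdx α.1 β.1 < α.1.length := lt_of_lt_of_le h1 (min_le_left _ _)
    have hjb : jIdx α.1 β.1 < β.1.length := lt_of_lt_of_le h1 (min_le_right _ _)
    have hne : α.1[jIdx α.1 β.1]'hja ≠ β.1[jIdx α.1 β.1]'hjb := by
      intro he
      apply jIdx_getElem?_ne h1
      rw [List.getElem?_eq_getElem hja, List.getElem?_eq_getElem hjb, he]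
    rcases lt_or_gt_of_ne hne with hlt | hgt
    · exact Or.inl (Or.inl ⟨h1, (iter_lt_iff Y m _ _).2 hlt⟩)
    · exfalso
      have e1 : cIter Y m α.1 β.1 = onePlusIter Y m (α.1[jIdx α.1 β.1]'hja) := by
        unfold cIter cW extW
        rw [dif_pos hja]
      by_cases h2 : jIdx β.1 γ < β.1.length
      · have e2 : cIter Y m β.1 γ = onePlusIter Y m (β.1[jIdx β.1 γ]'h2) := by
          unfold cIter cW extW
          rw [dif_pos h2]
        rw [e1, e2] at hc'
        have hd : leIter Y m (β.1[jIdx β.1 γ]'h2) (β.1[jIdx α.1 β.1]'hjb) :=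
          chain_le_getElem β.2 hj h2
        have hlt2 : ltIter Y m (β.1[jIdx β.1 γ]'h2) (α.1[jIdx α.1 β.1]'hja) :=
          lt_of_le_of_lt hd hgt
        exact absurd hc' (not_le_of_gt (onePlus_lt_onePlus Y m hlt2))
      · have e2 : cIter Y m β.1 γ = zeroIter Y m := by
          unfold cIter cW extW
          rw [dif_neg h2]
        rw [e1, e2] at hc'
        exact absurd hc' (not_le_of_gt (zero_lt_onePlus Y m _))
  · have hmin : jIdx α.1 β.1 = min α.1.length β.1.length :=
      le_antisymm hjm (not_lt.1 h1)
    rcases lt_trichotomy α.1.length β.1.length with hl | hl | hl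
    · exact Or.inl (Or.inr ⟨by omega, hl⟩)
    · right
      apply Subtype.ext
      exact eq_of_jIdx_eq hl (by omega)
    · exfalso
      have hja : jIdx α.1 β.1 < α.1.length := by omega
      have e1 : cIter Y m α.1 β.1 = onePlusIter Y m (α.1[jIdx α.1 β.1]'hja) := by
        unfold cIter cW extW
        rw [dif_pos hja]
      have h2 : ¬ jIdx β.1 γ < β.1.length := by omega
      have e2 : cIter Y m β.1 γ = zeroIter Y m := by
        unfold cIter cW extW
        rw [dif_neg h2]
      rw [e1, e2] at hc'
      exact absurd hc' (not_le_of_gt (zero_lt_onePlus Y m _))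

/-- Proposition 2.5. Let `X = ω + Y`, `f : ℕ → ω^X_n` and `k < n`.
If `f_k : [ℕ]^{k+1} → ℕ^k × ω^X_{n-k}` is bad, then so is
`f_{k+1} : [ℕ]^{k+2} → ℕ^{k+1} × ω^X_{n-k-1}`. -/
theorem fk_succ_bad_of_bad {Y : Type u} [LinearOrder Y] (n : ℕ)
    (f : ℕ → (iterPack (basePack Y) n).T) (k : ℕ) (hk : k < n)
    (hbad : ¬ GoodSub (prodLE (iterPack (basePack Y) (n - k)).le)
      (fun s => fk n f k s.1)) :
    ¬ GoodSub (prodLE (iterPack (basePack Y) (n - (k + 1))).le)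
      (fun s => fk n f (k + 1) s.1) := by
  intro hgood
  apply hbad
  obtain ⟨s, t, hst, hle⟩ := hgood
  have hvt : t.1 ∘ Fin.castSucc = s.1 ∘ Fin.succ := funext fun i => (hst.2 i).symm
  simp only [fk, dif_pos hk] at hle
  rw [hvt] at hle
  obtain ⟨h1, h2⟩ := hle
  have hJ := h1 (Fin.last k)
  simp only [Fin.snoc_last] at hJ
  refine ⟨⟨s.1 ∘ Fin.castSucc, s.2.comp Fin.strictMono_castSucc⟩,
    ⟨s.1 ∘ Fin.succ, s.2.comp Fin.strictMono_succ⟩,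
    ⟨s.2 (Fin.castSucc_lt_succ (i := 0)), fun i => congrArg s.1 (Fin.succ_castSucc i).symm⟩, ?_, ?_⟩
  · intro i
    have := h1 i.castSucc
    simpa only [Fin.snoc_castSucc] using this
  · refine (castT_le (show n - k = (n - (k + 1)) + 1 by omega) _ _).1 ?_
    exact key_le (n - (k + 1)) _ _ _ hJ h2
end

section
/- Let X and Y be quasi orders and n ∈ ℕ. If there exist order embeddings of (ℕ, ≤) into Y and of X into Y, then there is an embedding of the componentwise quasi order ℕ^n × X into the Higman order on finite lists over Y: a map h such that for all a, b ∈ ℕ^n × X, a ≤ b holds iff h(a) ≤ h(b) in the Higman order. -/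
universe u v

theorem myAux1 {m : ℕ} (f : Fin m → Fin m) (hf : StrictMono f) :
    ∀ k, ∀ i : Fin m, (i : ℕ) = k → k ≤ (f i : ℕ) := by
  intro k
  induction k with
  | zero => intro i _; exact Nat.zero_le _
  | succ k ih =>
    intro i hi
    have hk : k < m := by omega
    have h1 : k ≤ (f ⟨k, hk⟩ : ℕ) := ih ⟨k, hk⟩ rfl
    have h2 : f ⟨k, hk⟩ < f i := hf (by simp [Fin.lt_def]; omega)
    have h3 : (f ⟨k, hk⟩ : ℕ) < (f i : ℕ) := h2
    omega

theorem myAux2 {m : ℕ} (f : Fin m → Fin m) (hf : StrictMono f) :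
    ∀ d, ∀ i : Fin m, m - 1 - (i : ℕ) = d → (f i : ℕ) ≤ i := by
  intro d
  induction d with
  | zero =>
    intro i h
    have h1 : (f i : ℕ) < m := (f i).isLt
    have h2 : (i : ℕ) < m := i.isLt
    omega
  | succ d ih =>
    intro i h
    have hi1 : (i : ℕ) + 1 < m := by have := i.isLt; omega
    have h1 : (f ⟨(i : ℕ) + 1, hi1⟩ : ℕ) ≤ (i : ℕ) + 1 := ih ⟨(i : ℕ) + 1, hi1⟩ (by simp; omega)
    have h2 : f i < f ⟨(i : ℕ) + 1, hi1⟩ := hf (by simp [Fin.lt_def])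
    have h3 : (f i : ℕ) < (f ⟨(i : ℕ) + 1, hi1⟩ : ℕ) := h2
    omega

theorem strictMono_fin_self_eq_id {m : ℕ} (f : Fin m → Fin m) (hf : StrictMono f)
    (i : Fin m) : f i = i := by
  have h1 := myAux1 f hf (i : ℕ) i rfl
  have h2 := myAux2 f hf (m - 1 - (i : ℕ)) i rfl
  exact Fin.ext (by omega)

/-- Let `X, Y` be quasi orders and `n ∈ ℕ`. If `(ℕ, ≤)` and `X` both
order-embed into `Y`, then the componentwise quasi order `ℕ^n × X` embeds into the Higman
order on finite lists over `Y`. -/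
theorem prod_embeds_higman {X Y : Type v} [Preorder X] [Preorder Y] (n : ℕ)
    (eN : ℕ → Y) (heN : ∀ a b : ℕ, a ≤ b ↔ eN a ≤ eN b)
    (eX : X → Y) (heX : ∀ a b : X, a ≤ b ↔ eX a ≤ eX b) :
    ∃ h : ((Fin n → ℕ) × X) → List Y,
      ∀ a b : (Fin n → ℕ) × X,
        ((∀ i, a.1 i ≤ b.1 i) ∧ a.2 ≤ b.2) ↔ HigmanLE (· ≤ ·) (h a) (h b) := by
  classical
  refine ⟨fun a => List.ofFn (fun i : Fin (n + 1) =>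
    if h : (i : ℕ) < n then eN (a.1 ⟨i, h⟩) else eX a.2), fun a b => ?_⟩
  constructor
  · rintro ⟨h1, h2⟩
    refine ⟨fun i => Fin.cast (by simp) i, fun i j hij => by simp only [Fin.lt_def, Fin.coe_cast]; exact hij, ?_⟩
    intro i
    simp only [List.get_ofFn]
    by_cases hi : ((i : ℕ) : ℕ) < n
    · simpa [hi] using (heN _ _).mp (h1 _)
    · simpa [hi] using (heX _ _).mp h2
  · rintro ⟨f, hf, hle⟩
    set g : Fin (n + 1) → Fin (n + 1) :=
      fun i => Fin.cast (by simp) (f (Fin.cast (by simp) i)) with hg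
    have hgm : StrictMono g := by
      intro i j hij
      have := hf (show Fin.cast (by simp) i < Fin.cast (by simp) j by
        simp only [Fin.lt_def, Fin.coe_cast]; exact hij)
      simp only [hg, Fin.lt_def, Fin.coe_cast]
      exact this
    have hid : ∀ i, g i = i := strictMono_fin_self_eq_id g hgm
    have key : ∀ i : Fin (n + 1),
        (if h : (i : ℕ) < n then eN (a.1 ⟨i, h⟩) else eX a.2) ≤
        (if h : (i : ℕ) < n then eN (b.1 ⟨i, h⟩) else eX b.2) := by
      intro i
      have := hle (Fin.cast (by simp) i)
      simp only [List.get_ofFn] at this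
      have hfi : ((f (Fin.cast (by simp) i)) : ℕ) = (i : ℕ) := by
        have := hid i
        simp [hg] at this
        exact congrArg Fin.val this
      convert this using 2 <;> simp [hfi]
    constructor
    · intro i
      have := key (Fin.castSucc i)
      simp [i.isLt] at this
      exact (heN _ _).mpr this
    · have := key (Fin.last n)
      simp at this
      exact (heX _ _).mpr this
end
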